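/- Let (V, Q) be an FBAS whose top tier T is symmetric with non-nested quorum set (T, ∅, t), where m = |T| and 1 ≤ t ≤ m; that is, T is the union of all minimal quorums of (V, Q) and for every v ∈ T, Q(v) = {q ⊆ V : v ∈ q and |q ∩ T| ≥ t}. Then every minimal splitting set of (V, Q) has cardinality exactly max(2t − m, 0). -/

import Mathlib

/-!
Every quorum contains a minimal quorum, hence a node of `T`, whose slice forces `t` nodes of `T`
into the quorum. So two quorums share at least `2t - |T|` nodes of `T`, and a splitting set
contains such a common part. Conversely, every `J ⊆ T` with `|J| = 2t - |T|` is splitting: if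
`t < |T|`, then `J` is the intersection of two distinct `t`-subsets of `T`, both quorums; if
`t = |T|`, then `J = T` is contained in every quorum, so `T` is the intersection of itself with
any other quorum. Minimality then forces a minimal splitting set to be such a `J`.
-/

open Finset

variable {α : Type*} [DecidableEq α]

/-- `U` is a quorum of the FBAS `(V, Q)`: a nonempty subset of `V` containing,
for every member `v`, some slice `q ∈ Q v` with `q ⊆ U`. -/
def IsQuorum (V : Finset α) (Q : α → Finset (Finset α)) (U : Finset α) : Prop :=
  U ⊆ V ∧ U.Nonempty ∧ ∀ v ∈ U, ∃ q ∈ Q v, q ⊆ U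

/-- A minimal quorum: a quorum none of whose proper subsets is a quorum. -/
def IsMinimalQuorum (V : Finset α) (Q : α → Finset (Finset α)) (U : Finset α) : Prop :=
  IsQuorum V Q U ∧ ∀ U' ⊂ U, ¬IsQuorum V Q U'

/-- A blocking set: a subset of `V` intersecting every quorum of `(V, Q)`. -/
def IsBlocking (V : Finset α) (Q : α → Finset (Finset α)) (B : Finset α) : Prop :=
  B ⊆ V ∧ ∀ U, IsQuorum V Q U → (B ∩ U).Nonempty

/-- A minimal blocking set: a blocking set none of whose proper subsets is blocking. -/
def IsMinimalBlocking (V : Finset α) (Q : α → Finset (Finset α)) (B : Finset α) : Prop :=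
  IsBlocking V Q B ∧ ∀ B' ⊂ B, ¬IsBlocking V Q B'

/-- A splitting set: a subset of `V` containing the intersection of two distinct quorums. -/
def IsSplitting (V : Finset α) (Q : α → Finset (Finset α)) (S : Finset α) : Prop :=
  S ⊆ V ∧ ∃ U₁ U₂, IsQuorum V Q U₁ ∧ IsQuorum V Q U₂ ∧ U₁ ≠ U₂ ∧ U₁ ∩ U₂ ⊆ S

/-- A minimal splitting set: a splitting set none of whose proper subsets is splitting. -/
def IsMinimalSplitting (V : Finset α) (Q : α → Finset (Finset α)) (S : Finset α) : Prop :=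
  IsSplitting V Q S ∧ ∀ S' ⊂ S, ¬IsSplitting V Q S'

/-- Well-formedness of an FBAS `(V, Q)`: every slice of every node `v ∈ V`
contains `v` and is a subset of `V`. -/
def WellFormed (V : Finset α) (Q : α → Finset (Finset α)) : Prop :=
  ∀ v ∈ V, ∀ q ∈ Q v, v ∈ q ∧ q ⊆ V

/-- `T` is the top tier of `(V, Q)`: the union of all minimal quorums. -/
def IsTopTier (V : Finset α) (Q : α → Finset (Finset α)) (T : Finset α) : Prop :=
  ∀ v, v ∈ T ↔ ∃ U, IsMinimalQuorum V Q U ∧ v ∈ U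

/-- `(V, Q)` enjoys quorum intersection: any two quorums share a node. -/
def QuorumIntersection (V : Finset α) (Q : α → Finset (Finset α)) : Prop :=
  ∀ U₁ U₂, IsQuorum V Q U₁ → IsQuorum V Q U₂ → (U₁ ∩ U₂).Nonempty

/-- The paper's "symmetric top tier with non-nested quorum set `(T, ∅, t)`". -/
def IsSymmetricThreshold (V : Finset α) (Q : α → Finset (Finset α)) (T : Finset α) (t : ℕ) :
    Prop :=
  ∀ v ∈ T, ∀ q : Finset α, q ∈ Q v ↔ (q ⊆ V ∧ v ∈ q ∧ t ≤ (q ∩ T).card)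

section

variable {V : Finset α} {Q : α → Finset (Finset α)} {T U U₁ U₂ J S : Finset α} {t : ℕ}

section

omit [DecidableEq α]

theorem isMinimalQuorum_iff_minimal : IsMinimalQuorum V Q U ↔ Minimal (IsQuorum V Q) U :=
  minimal_iff_forall_lt.symm

theorem IsQuorum.exists_isMinimalQuorum_subset (hU : IsQuorum V Q U) :
    ∃ M ⊆ U, IsMinimalQuorum V Q M := by
  simpa only [isMinimalQuorum_iff_minimal] using exists_minimal_le_of_wellFoundedLT _ U hU

theorem IsTopTier.subset (hT : IsTopTier V Q T) : T ⊆ V := fun v hv ↦ by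
  obtain ⟨M, hM, hvM⟩ := (hT v).1 hv
  exact hM.1.1 hvM

end

theorem IsMinimalSplitting.eq_of_subset (hS : IsMinimalSplitting V Q S) (hJS : J ⊆ S)
    (hJ : IsSplitting V Q J) : J = S := by
  by_contra hne
  exact hS.2 J (ssubset_of_subset_of_ne hJS hne) hJ

theorem IsTopTier.inter_nonempty_of_isQuorum (hT : IsTopTier V Q T) (hU : IsQuorum V Q U) :
    (U ∩ T).Nonempty := by
  obtain ⟨M, hMU, hM⟩ := hU.exists_isMinimalQuorum_subset
  obtain ⟨v, hvM⟩ := hM.1.2.1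
  exact ⟨v, mem_inter.2 ⟨hMU hvM, (hT v).2 ⟨M, hM, hvM⟩⟩⟩

namespace IsSymmetricThreshold

theorem isQuorum (hsym : IsSymmetricThreshold V Q T t) (hTV : T ⊆ V) (ht : 0 < t)
    (hJT : J ⊆ T) (hJ : t ≤ J.card) : IsQuorum V Q J := by
  refine ⟨hJT.trans hTV, card_pos.1 (ht.trans_le hJ), fun v hv ↦ ⟨J, ?_, subset_rfl⟩⟩
  rw [hsym v (hJT hv), inter_eq_left.2 hJT]
  exact ⟨hJT.trans hTV, hv, hJ⟩

theorem le_card_inter (hsym : IsSymmetricThreshold V Q T t) (hT : IsTopTier V Q T)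
    (hU : IsQuorum V Q U) : t ≤ (U ∩ T).card := by
  obtain ⟨v, hv⟩ := hT.inter_nonempty_of_isQuorum hU
  obtain ⟨q, hq, hqU⟩ := hU.2.2 v (mem_inter.1 hv).1
  exact ((hsym v (mem_inter.1 hv).2 q).1 hq).2.2.trans
    (card_le_card (inter_subset_inter_right hqU))

theorem two_mul_sub_card_le_card_inter (hsym : IsSymmetricThreshold V Q T t)
    (hT : IsTopTier V Q T) (hU₁ : IsQuorum V Q U₁) (hU₂ : IsQuorum V Q U₂) :
    2 * t - T.card ≤ (U₁ ∩ U₂ ∩ T).card := by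
  have hinter : U₁ ∩ T ∩ (U₂ ∩ T) = U₁ ∩ U₂ ∩ T := by
    rw [inter_inter_inter_comm, inter_self]
  have hunion : (U₁ ∩ T ∪ U₂ ∩ T).card ≤ T.card :=
    card_le_card (union_subset inter_subset_right inter_subset_right)
  have hincl := card_union_add_card_inter (U₁ ∩ T) (U₂ ∩ T)
  rw [hinter] at hincl
  have h₁ := hsym.le_card_inter hT hU₁
  have h₂ := hsym.le_card_inter hT hU₂
  omega

theorem isSplitting_of_lt_card (hsym : IsSymmetricThreshold V Q T t) (hTV : T ⊆ V)
    (ht : 0 < t) (htT : t < T.card) (hJT : J ⊆ T) (hJ : J.card = 2 * t - T.card) :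
    IsSplitting V Q J := by
  obtain ⟨A, hJA, hAT, hA⟩ := exists_subsuperset_card_eq hJT (n := t) (by omega) htT.le
  obtain ⟨P, hPA, hP⟩ := exists_subset_card_eq (s := T \ A) (n := t - J.card)
    (by rw [card_sdiff_of_subset hAT]; omega)
  have hAP : Disjoint A P := disjoint_of_subset_right hPA disjoint_sdiff
  obtain ⟨p, hp⟩ : P.Nonempty := card_pos.1 (by omega)
  refine ⟨hJT.trans hTV, A, J ∪ P, hsym.isQuorum hTV ht hAT hA.ge,
    hsym.isQuorum hTV ht (union_subset hJT (hPA.trans sdiff_subset)) ?_, ?_, ?_⟩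
  · rw [card_union_of_disjoint (disjoint_of_subset_left hJA hAP)]
    omega
  · exact fun h ↦ disjoint_left.1 hAP (h ▸ mem_union_right J hp) hp
  · rw [inter_union_distrib_left, inter_eq_right.2 hJA, disjoint_iff_inter_eq_empty.1 hAP,
      union_empty]

theorem subset_of_card_le (hsym : IsSymmetricThreshold V Q T t) (hT : IsTopTier V Q T)
    (htT : T.card ≤ t) (hU : IsQuorum V Q U) : T ⊆ U := by
  have hUT : U ∩ T = T :=
    eq_of_subset_of_card_le inter_subset_right (htT.trans (hsym.le_card_inter hT hU))
  exact hUT ▸ inter_subset_left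

theorem isSplitting_of_card_le (hsym : IsSymmetricThreshold V Q T t) (hT : IsTopTier V Q T)
    (ht : 0 < t) (htT : T.card ≤ t) (hU₁ : IsQuorum V Q U₁) (hU₂ : IsQuorum V Q U₂)
    (hne : U₁ ≠ U₂) : IsSplitting V Q T := by
  have hTq : IsQuorum V Q T := hsym.isQuorum hT.subset ht subset_rfl
    ((hsym.le_card_inter hT hU₁).trans (card_le_card inter_subset_right))
  obtain ⟨U, hU, hUT⟩ : ∃ U, IsQuorum V Q U ∧ U ≠ T := by
    by_cases h : U₁ = T
    · exact ⟨U₂, hU₂, h ▸ hne.symm⟩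
    · exact ⟨U₁, hU₁, h⟩
  exact ⟨hT.subset, T, U, hTq, hU, hUT.symm,
    (inter_eq_left.2 (hsym.subset_of_card_le hT htT hU)).subset⟩

end IsSymmetricThreshold

end

theorem symmetric_top_tier_minimal_splitting_card_general
    (V : Finset α) (Q : α → Finset (Finset α))
    (T : Finset α) (hT : IsTopTier V Q T)
    (t : ℕ) (ht1 : 1 ≤ t)
    (hsym : ∀ v ∈ T, ∀ q : Finset α, q ∈ Q v ↔ (q ⊆ V ∧ v ∈ q ∧ t ≤ (q ∩ T).card)) :
    ∀ S, IsMinimalSplitting V Q S → S.card = 2 * t - T.card := by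
  intro S hS
  obtain ⟨-, U₁, U₂, hU₁, hU₂, hne, hU₁₂S⟩ := hS.1
  obtain ⟨J, hJU, hJ⟩ :=
    exists_subset_card_eq (IsSymmetricThreshold.two_mul_sub_card_le_card_inter hsym hT hU₁ hU₂)
  have hJT : J ⊆ T := hJU.trans inter_subset_right
  have hJsplit : IsSplitting V Q J := by
    rcases lt_or_ge t T.card with htT | htT
    · exact IsSymmetricThreshold.isSplitting_of_lt_card hsym hT.subset ht1 htT hJT hJ
    · rw [eq_of_subset_of_card_le hJT (by omega)]
      exact IsSymmetricThreshold.isSplitting_of_card_le hsym hT ht1 htT hU₁ hU₂ hne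
  rw [← hS.eq_of_subset (hJU.trans (inter_subset_left.trans hU₁₂S)) hJsplit, hJ]

/-- in an FBAS with a symmetric top tier `T` with non-nested quorum
set `(T, ∅, t)` (with `1 ≤ t ≤ |T|`), every minimal splitting set has cardinality
exactly `max (2t - |T|) 0` (expressed via truncated natural subtraction). -/
theorem symmetric_top_tier_minimal_splitting_card
    (V : Finset α) (Q : α → Finset (Finset α)) (hwf : WellFormed V Q)
    (T : Finset α) (hT : IsTopTier V Q T)
    (t : ℕ) (ht1 : 1 ≤ t) (ht2 : t ≤ T.card)
    (hsym : ∀ v ∈ T, ∀ q : Finset α, q ∈ Q v ↔ (q ⊆ V ∧ v ∈ q ∧ t ≤ (q ∩ T).card)) :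
    ∀ S, IsMinimalSplitting V Q S → S.card = 2 * t - T.card :=
  symmetric_top_tier_minimal_splitting_card_general V Q T hT t ht1 hsym
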